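/- arXiv:1401.6037 — 2 statements merged into one kernel-verified Lean document; each statement's English description precedes it below -/
import Mathlib

section
/- In the nilcoxeter algebra N_n, any product u_{i_1} u_{i_2} ⋯ u_{i_k} of k generators with k > n(n-1)/2 equals zero. -/
/-- The defining relations of the nilcoxeter algebra `N_n`: the generators
`u_1, ..., u_{n-1}` (indexed here by `Fin (n-1)`) square to zero, distant generators
commute, and adjacent generators satisfy the braid relation. -/
inductive NilCoxeterRel (F : Type) [Field F] (n : ℕ) :
    FreeAlgebra F (Fin (n - 1)) → FreeAlgebra F (Fin (n - 1)) → Prop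
  | sq (i : Fin (n - 1)) :
      NilCoxeterRel F n (FreeAlgebra.ι F i * FreeAlgebra.ι F i) 0
  | comm (i j : Fin (n - 1)) (h : (i : ℕ) + 1 < j ∨ (j : ℕ) + 1 < i) :
      NilCoxeterRel F n (FreeAlgebra.ι F i * FreeAlgebra.ι F j)
        (FreeAlgebra.ι F j * FreeAlgebra.ι F i)
  | braid (i j : Fin (n - 1)) (h : (j : ℕ) = (i : ℕ) + 1) :
      NilCoxeterRel F n (FreeAlgebra.ι F i * FreeAlgebra.ι F j * FreeAlgebra.ι F i)
        (FreeAlgebra.ι F j * FreeAlgebra.ι F i * FreeAlgebra.ι F j)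

/-- The nilcoxeter algebra `N_n` over the field `F`. -/
abbrev NilCoxeter (F : Type) [Field F] (n : ℕ) := RingQuot (NilCoxeterRel F n)

/-- The generators `u_i` of the nilcoxeter algebra. -/
noncomputable def NilCoxeter.u (F : Type) [Field F] (n : ℕ) (i : Fin (n - 1)) :
    NilCoxeter F n :=
  RingQuot.mkAlgHom F (NilCoxeterRel F n) (FreeAlgebra.ι F i)

/-!
Send the generator `u_i` to the adjacent transposition `s_i = (i i+1)` of `Fin n`, and call a
word reduced when the permutation it spells has as many inversions as the word has letters; there
are at most `n(n-1)/2` inversions. Every word is zero in `N_n` or reduced: if `t` is reduced and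
`i :: t` is not, then `s_i` is a left descent of the permutation of `t`, so by the exchange property
`t` is braid-equivalent to a word `i :: s`, and `u_i u_t = u_i u_i u_s = 0`. The exchange property
itself is proved by induction on the length of `t`, comparing `i` with the first letter of `t`.
-/

open Finset

namespace Equiv.Perm

variable {n : ℕ}

def inversions (w : Perm (Fin n)) : Finset (Fin n × Fin n) :=
  {p | p.1 < p.2 ∧ w p.2 < w p.1}

@[simp]
lemma mem_inversions {w : Perm (Fin n)} {p : Fin n × Fin n} :
    p ∈ w.inversions ↔ p.1 < p.2 ∧ w p.2 < w p.1 := by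
  simp [inversions]

def numInversions (w : Perm (Fin n)) : ℕ := #w.inversions

@[simp]
lemma numInversions_one : numInversions (1 : Perm (Fin n)) = 0 := by
  simp only [numInversions, inversions, card_eq_zero, filter_eq_empty_iff]
  exact fun p _ h => lt_asymm h.1 h.2

lemma numInversions_le_choose_two (w : Perm (Fin n)) : w.numInversions ≤ n.choose 2 :=
  calc #w.inversions ≤ #{p ∈ (univ : Finset (Fin n)) ×ˢ univ | p.1 < p.2} :=
        card_le_card fun p hp => by simp_all
    _ = n.choose 2 := by rw [card_product_filter_lt, card_univ, Fintype.card_fin]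

lemma swap_lt_swap_iff {a b x y : Fin n} (hab : (b : ℕ) = a + 1)
    (hx : ¬(x = a ∧ y = b)) (hy : ¬(x = b ∧ y = a)) :
    swap a b x < swap a b y ↔ x < y := by
  simp only [swap_apply_def, Fin.ext_iff, Fin.lt_def] at *
  split_ifs <;> omega

lemma inversions_swap_mul {a b : Fin n} (hab : (b : ℕ) = a + 1) {w : Perm (Fin n)}
    (h : w⁻¹ a < w⁻¹ b) :
    (swap a b * w).inversions = insert (w⁻¹ a, w⁻¹ b) w.inversions := by
  ext ⟨c, d⟩
  simp only [mem_inversions, mem_insert, Prod.mk.injEq, mul_apply, eq_inv_iff_eq]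
  have hlt : a < b := by simp [Fin.lt_def, hab]
  by_cases hab' : w c = a ∧ w d = b
  · obtain ⟨hc, hd⟩ := hab'
    rw [← eq_inv_iff_eq.2 hc, ← eq_inv_iff_eq.2 hd] at h
    simp [hc, hd, h, hlt]
  by_cases hba : w c = b ∧ w d = a
  · obtain ⟨hc, hd⟩ := hba
    rw [← eq_inv_iff_eq.2 hc, ← eq_inv_iff_eq.2 hd] at h
    simp [hc, hd, h.not_gt, hlt.not_gt, hlt.ne]
  rw [swap_lt_swap_iff hab (by tauto) (by tauto)]
  tauto

variable {m : ℕ}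

def adjSwap (i : Fin m) : Perm (Fin (m + 1)) := swap i.castSucc i.succ

@[simp]
lemma adjSwap_apply_castSucc (i : Fin m) : adjSwap i i.castSucc = i.succ := swap_apply_left _ _

@[simp]
lemma adjSwap_apply_succ (i : Fin m) : adjSwap i i.succ = i.castSucc := swap_apply_right _ _

@[simp]
lemma adjSwap_mul_self (i : Fin m) : adjSwap i * adjSwap i = 1 := swap_mul_self _ _

lemma inv_adjSwap_mul_apply (i : Fin m) (w : Perm (Fin (m + 1))) (x : Fin (m + 1)) :
    (adjSwap i * w)⁻¹ x = w⁻¹ (adjSwap i x) := by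
  simp [adjSwap, mul_inv_rev, swap_inv]

lemma adjSwap_apply_of_ne {i : Fin m} {x : Fin (m + 1)} (h₁ : (x : ℕ) ≠ i) (h₂ : (x : ℕ) ≠ i + 1) :
    adjSwap i x = x :=
  swap_apply_of_ne_of_ne (by simpa [Fin.ext_iff] using h₁) (by simpa [Fin.ext_iff] using h₂)

lemma adjSwap_comm {i j : Fin m} (h : (i : ℕ) + 1 < j) :
    adjSwap i * adjSwap j = adjSwap j * adjSwap i :=
  (Disjoint.commute (disjoint_swap_swap (by simp [Fin.ext_iff]; omega))).eq

lemma adjSwap_braid {i j : Fin m} (h : (j : ℕ) = i + 1) :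
    adjSwap i * adjSwap j * adjSwap i = adjSwap j * adjSwap i * adjSwap j := by
  have conj (k : Fin m) (x y : Fin (m + 1)) :
      adjSwap k * swap x y * adjSwap k = swap (adjSwap k x) (adjSwap k y) := by
    rw [swap_apply_apply, adjSwap, swap_inv]
  have hij : i.succ = j.castSucc := Fin.ext (by simp [h])
  calc adjSwap i * adjSwap j * adjSwap i = swap i.castSucc j.succ := by
        rw [show adjSwap j = swap j.castSucc j.succ from rfl, conj, ← hij, adjSwap_apply_succ,
          adjSwap_apply_of_ne (x := j.succ) (by simp; omega) (by simp; omega)]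
    _ = adjSwap j * adjSwap i * adjSwap j := by
        rw [show adjSwap i = swap i.castSucc i.succ from rfl, conj, hij, adjSwap_apply_castSucc,
          adjSwap_apply_of_ne (x := i.castSucc) (by simp; omega) (by simp; omega)]

/-- In terms of length: `numInversions (adjSwap i * w) < numInversions w`. -/
def IsLeftDescent (w : Perm (Fin (m + 1))) (i : Fin m) : Prop := w⁻¹ i.succ < w⁻¹ i.castSucc

variable {w : Perm (Fin (m + 1))} {i j : Fin m}

lemma not_isLeftDescent_one (i : Fin m) : ¬(1 : Perm (Fin (m + 1))).IsLeftDescent i := by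
  simp [IsLeftDescent, Fin.castSucc_lt_succ.le]

lemma inv_castSucc_lt_inv_succ (h : ¬w.IsLeftDescent i) : w⁻¹ i.castSucc < w⁻¹ i.succ :=
  (not_lt.1 h).lt_of_ne (w⁻¹.injective.ne Fin.castSucc_lt_succ.ne)

lemma isLeftDescent_adjSwap_mul_iff : (adjSwap i * w).IsLeftDescent i ↔ ¬w.IsLeftDescent i := by
  rw [IsLeftDescent, IsLeftDescent, inv_adjSwap_mul_apply, inv_adjSwap_mul_apply,
    adjSwap_apply_succ, adjSwap_apply_castSucc, not_lt]
  exact ⟨le_of_lt, fun h => inv_castSucc_lt_inv_succ (not_lt.2 h)⟩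

lemma numInversions_adjSwap_mul_of_not_isLeftDescent (h : ¬w.IsLeftDescent i) :
    (adjSwap i * w).numInversions = w.numInversions + 1 := by
  have hlt := inv_castSucc_lt_inv_succ h
  rw [numInversions, adjSwap, inversions_swap_mul (by simp) hlt,
    card_insert_of_notMem (by simp [Fin.castSucc_lt_succ.le])]
  rfl

lemma numInversions_adjSwap_mul_of_isLeftDescent (h : w.IsLeftDescent i) :
    (adjSwap i * w).numInversions + 1 = w.numInversions := by
  have := numInversions_adjSwap_mul_of_not_isLeftDescent
    (isLeftDescent_adjSwap_mul_iff.not.2 (not_not_intro h))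
  rwa [← mul_assoc, adjSwap_mul_self, one_mul, eq_comm] at this

lemma isLeftDescent_of_isLeftDescent_adjSwap_mul (hij : i ≠ j)
    (h : (adjSwap j * w).IsLeftDescent i) (hj : ¬w.IsLeftDescent j) : w.IsLeftDescent i := by
  have hj' := inv_castSucc_lt_inv_succ hj
  have hne : (i : ℕ) ≠ j := Fin.val_ne_of_ne hij
  unfold IsLeftDescent at *
  rw [inv_adjSwap_mul_apply, inv_adjSwap_mul_apply] at h
  by_cases hup : (j : ℕ) = i + 1
  · have hb : i.succ = j.castSucc := Fin.ext (by simp [hup])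
    rw [hb, adjSwap_apply_castSucc,
      adjSwap_apply_of_ne (x := i.castSucc) (by simp; omega) (by simp; omega)] at h
    rw [hb]
    exact hj'.trans h
  by_cases hdown : (i : ℕ) = j + 1
  · have ha : i.castSucc = j.succ := Fin.ext (by simp [hdown])
    rw [ha, adjSwap_apply_succ,
      adjSwap_apply_of_ne (x := i.succ) (by simp; omega) (by simp; omega)] at h
    rw [ha]
    exact h.trans hj'
  rwa [adjSwap_apply_of_ne (x := i.succ) (by simp; omega) (by simp; omega),
    adjSwap_apply_of_ne (x := i.castSucc) (by simp; omega) (by simp; omega)] at h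

lemma isLeftDescent_adjSwap_mul_comm (h : (j : ℕ) = i + 1) :
    (adjSwap j * w).IsLeftDescent i ↔ (adjSwap i * w).IsLeftDescent j := by
  have hb : i.succ = j.castSucc := Fin.ext (by simp [h])
  have hj : adjSwap j i.succ = j.succ := by rw [hb, adjSwap_apply_castSucc]
  have hi : adjSwap i j.castSucc = i.castSucc := by rw [← hb, adjSwap_apply_succ]
  simp only [IsLeftDescent, inv_adjSwap_mul_apply]
  rw [hj, hi, adjSwap_apply_of_ne (x := i.castSucc) (by simp; omega) (by simp; omega),
    adjSwap_apply_of_ne (x := j.succ) (by simp; omega) (by simp; omega)]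

end Equiv.Perm

namespace NilCoxeter

open Equiv Equiv.Perm

variable {m : ℕ}

def wordPerm (t : List (Fin m)) : Perm (Fin (m + 1)) := (t.map adjSwap).prod

@[simp]
lemma wordPerm_nil : wordPerm ([] : List (Fin m)) = 1 := rfl

@[simp]
lemma wordPerm_cons (i : Fin m) (t : List (Fin m)) :
    wordPerm (i :: t) = adjSwap i * wordPerm t := by
  simp [wordPerm]

def IsReduced (t : List (Fin m)) : Prop := (wordPerm t).numInversions = t.length

lemma numInversions_wordPerm_le (t : List (Fin m)) : (wordPerm t).numInversions ≤ t.length := by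
  induction t with
  | nil => simp
  | cons i t ih =>
    by_cases h : (wordPerm t).IsLeftDescent i
    · have := numInversions_adjSwap_mul_of_isLeftDescent h
      simp only [wordPerm_cons, List.length_cons]
      omega
    · rw [wordPerm_cons, numInversions_adjSwap_mul_of_not_isLeftDescent h, List.length_cons]
      omega

lemma isReduced_cons_iff {i : Fin m} {t : List (Fin m)} :
    IsReduced (i :: t) ↔ IsReduced t ∧ ¬(wordPerm t).IsLeftDescent i := by
  have := numInversions_wordPerm_le t
  simp only [IsReduced, wordPerm_cons, List.length_cons]
  by_cases h : (wordPerm t).IsLeftDescent i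
  · have := numInversions_adjSwap_mul_of_isLeftDescent h
    simp only [h, not_true_eq_false, and_false, iff_false]
    omega
  · simp [numInversions_adjSwap_mul_of_not_isLeftDescent h, h]

inductive BraidEquiv : List (Fin m) → List (Fin m) → Prop
  | refl (t : List (Fin m)) : BraidEquiv t t
  | symm {s t : List (Fin m)} : BraidEquiv s t → BraidEquiv t s
  | trans {s t u : List (Fin m)} : BraidEquiv s t → BraidEquiv t u → BraidEquiv s u
  | cons (i : Fin m) {s t : List (Fin m)} : BraidEquiv s t → BraidEquiv (i :: s) (i :: t)
  | comm {i j : Fin m} (h : (i : ℕ) + 1 < j) (t : List (Fin m)) :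
      BraidEquiv (i :: j :: t) (j :: i :: t)
  | braid {i j : Fin m} (h : (j : ℕ) = i + 1) (t : List (Fin m)) :
      BraidEquiv (i :: j :: i :: t) (j :: i :: j :: t)

namespace BraidEquiv

variable {s t : List (Fin m)}

lemma length_eq (h : BraidEquiv s t) : s.length = t.length := by
  induction h <;> simp_all

lemma prod_map_eq {M : Type*} [Monoid M] {g : Fin m → M}
    (hcomm : ∀ i j : Fin m, (i : ℕ) + 1 < j → g i * g j = g j * g i)
    (hbraid : ∀ i j : Fin m, (j : ℕ) = i + 1 → g i * g j * g i = g j * g i * g j)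
    (h : BraidEquiv s t) : (s.map g).prod = (t.map g).prod := by
  induction h with
  | refl => rfl
  | symm _ ih => exact ih.symm
  | trans _ _ ih₁ ih₂ => exact ih₁.trans ih₂
  | cons i _ ih => simp [ih]
  | comm h => simp [← mul_assoc, hcomm _ _ h]
  | braid h => simp [← mul_assoc, hbraid _ _ h]

lemma wordPerm_eq (h : BraidEquiv s t) : wordPerm s = wordPerm t :=
  h.prod_map_eq (fun _ _ => adjSwap_comm) (fun _ _ => adjSwap_braid)

lemma isReduced_iff (h : BraidEquiv s t) : IsReduced s ↔ IsReduced t := by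
  rw [IsReduced, IsReduced, h.wordPerm_eq, h.length_eq]

end BraidEquiv

theorem exists_braidEquiv_cons_of_isLeftDescent {t : List (Fin m)} {i : Fin m}
    (ht : IsReduced t) (hi : (wordPerm t).IsLeftDescent i) : ∃ s, BraidEquiv t (i :: s) := by
  match t with
  | [] => exact absurd hi (not_isLeftDescent_one i)
  | j :: t =>
    obtain ⟨ht, hj⟩ := isReduced_cons_iff.1 ht
    rw [wordPerm_cons] at hi
    by_cases hij : i = j
    · exact ⟨t, hij ▸ .refl _⟩
    obtain ⟨s, hts⟩ := exists_braidEquiv_cons_of_isLeftDescent ht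
      (isLeftDescent_of_isLeftDescent_adjSwap_mul hij hi hj)
    have hjt : BraidEquiv (j :: t) (j :: i :: s) := hts.cons j
    have hs : IsReduced s := (isReduced_cons_iff.1 (hts.isReduced_iff.1 ht)).1
    have hws : wordPerm s = adjSwap i * wordPerm t := by
      rw [hts.wordPerm_eq, wordPerm_cons, ← mul_assoc, adjSwap_mul_self, one_mul]
    have : s.length < t.length := by simp [hts.length_eq]
    -- For adjacent `i, j`, `j` is also a left descent of `wordPerm s = s_i (wordPerm t)`,
    -- so `s ≈ j :: s'` and `j :: t ≈ j i j s' ≈ i j i s'`.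
    by_cases hup : (j : ℕ) = i + 1
    · obtain ⟨s', hss'⟩ := exists_braidEquiv_cons_of_isLeftDescent hs
        (hws ▸ (isLeftDescent_adjSwap_mul_comm hup).1 hi)
      exact ⟨j :: i :: s', (hjt.trans ((hss'.cons i).cons j)).trans (.symm (.braid hup s'))⟩
    by_cases hdown : (i : ℕ) = j + 1
    · obtain ⟨s', hss'⟩ := exists_braidEquiv_cons_of_isLeftDescent hs
        (hws ▸ (isLeftDescent_adjSwap_mul_comm hdown).2 hi)
      exact ⟨j :: i :: s', (hjt.trans ((hss'.cons i).cons j)).trans (.braid hdown s')⟩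
    have hne : (i : ℕ) ≠ j := Fin.val_ne_of_ne hij
    refine ⟨j :: s, hjt.trans ?_⟩
    rcases Nat.lt_or_gt_of_ne hne with hlt | hgt
    · exact .symm (.comm (by omega) s)
    · exact .comm (by omega) s
termination_by t.length

variable {F : Type} [Field F] {n : ℕ}

lemma u_mul_self (i : Fin (n - 1)) : u F n i * u F n i = 0 := by
  rw [u, ← map_mul, RingQuot.mkAlgHom_rel F (NilCoxeterRel.sq i), map_zero]

lemma u_comm {i j : Fin (n - 1)} (h : (i : ℕ) + 1 < j ∨ (j : ℕ) + 1 < i) :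
    u F n i * u F n j = u F n j * u F n i := by
  rw [u, u, ← map_mul, ← map_mul, RingQuot.mkAlgHom_rel F (NilCoxeterRel.comm i j h)]

lemma u_braid {i j : Fin (n - 1)} (h : (j : ℕ) = i + 1) :
    u F n i * u F n j * u F n i = u F n j * u F n i * u F n j := by
  rw [u, u, ← map_mul, ← map_mul, ← map_mul, ← map_mul,
    RingQuot.mkAlgHom_rel F (NilCoxeterRel.braid i j h)]

theorem prod_map_u_eq_zero_or_isReduced (t : List (Fin m)) :
    (t.map (u F (m + 1))).prod = 0 ∨ IsReduced t := by
  induction t with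
  | nil => exact .inr (by simp [IsReduced])
  | cons i t ih =>
    rcases ih with h | ht
    · exact .inl (by simp [h])
    by_cases hi : (wordPerm t).IsLeftDescent i
    · obtain ⟨s, hts⟩ := exists_braidEquiv_cons_of_isLeftDescent ht hi
      left
      rw [List.map_cons, List.prod_cons,
        hts.prod_map_eq (fun _ _ h => u_comm (Or.inl h)) (fun _ _ h => u_braid h),
        List.map_cons, List.prod_cons, ← mul_assoc, u_mul_self, zero_mul]
    · exact .inr (isReduced_cons_iff.2 ⟨ht, hi⟩)

end NilCoxeter

/-- In the nilcoxeter algebra `N_n`, any product of `k` generators with `k > n(n-1)/2`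
is zero. -/
theorem stmt_7 (F : Type) [Field F] (n k : ℕ) (hk : n * (n - 1) / 2 < k)
    (f : Fin k → Fin (n - 1)) :
    (List.ofFn fun j => NilCoxeter.u F n (f j)).prod = 0 := by
  obtain _ | m := n
  · exact (f ⟨0, by omega⟩).elim0
  have hzero := NilCoxeter.prod_map_u_eq_zero_or_isReduced (F := F) (m := m) (List.ofFn f)
  rw [List.map_ofFn] at hzero
  refine hzero.resolve_right fun hred => ?_
  have hbound := (NilCoxeter.wordPerm (List.ofFn f)).numInversions_le_choose_two
  rw [hred, List.length_ofFn, Nat.choose_two_right] at hbound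
  exact hbound.not_gt hk
end

section
/- The nilcoxeter algebra N_{n+1} is free of rank n+1 as a right module over the subalgebra N_n generated by u_1, ..., u_{n-1}, with basis 1, u_n, u_{n-1}u_n, ..., u_1 u_2 ⋯ u_n. -/
/-- The inclusion `N_n → N_{n+1}` sending each generator `u_i` to `u_i`. -/
noncomputable def NilCoxeter.incl (F : Type) [Field F] (n : ℕ) :
    NilCoxeter F n →ₐ[F] NilCoxeter F (n + 1) :=
  RingQuot.liftAlgHom F
    ⟨FreeAlgebra.lift F
        (fun i => NilCoxeter.u F (n + 1) (Fin.castLE (Nat.sub_le n 1) i)), by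
      rintro x y (⟨i⟩ | ⟨i, j, h⟩ | ⟨i, j, h⟩) <;>
        simp only [map_mul, map_zero, FreeAlgebra.lift_ι_apply]
      · have := RingQuot.mkAlgHom_rel F
          (NilCoxeterRel.sq (F := F) (n := n + 1) (Fin.castLE (Nat.sub_le n 1) i))
        simpa [NilCoxeter.u] using this
      · have := RingQuot.mkAlgHom_rel F
          (NilCoxeterRel.comm (F := F) (n := n + 1) (Fin.castLE (Nat.sub_le n 1) i)
            (Fin.castLE (Nat.sub_le n 1) j) (by simpa using h))
        simpa [NilCoxeter.u] using this
      · have := RingQuot.mkAlgHom_rel F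
          (NilCoxeterRel.braid (F := F) (n := n + 1) (Fin.castLE (Nat.sub_le n 1) i)
            (Fin.castLE (Nat.sub_le n 1) j) (by simpa using h))
        simpa [NilCoxeter.u] using this⟩

/-- `N_{n+1}` as a right `N_n`-module (i.e. a module over the opposite ring), via the
inclusion `N_n → N_{n+1}` and right multiplication. -/
noncomputable def NilCoxeter.rightModule (F : Type) [Field F] (n : ℕ) :
    Module (NilCoxeter F n)ᵐᵒᵖ (NilCoxeter F (n + 1)) :=
  Module.compHom (NilCoxeter F (n + 1)) (RingHom.op (NilCoxeter.incl F n).toRingHom)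

/-- The element `u_{n-k} u_{n-k+1} ⋯ u_{n-1}` of `N_{n+1}` (in 0-indexed notation), i.e.
the basis element `u_{n-k+1} ⋯ u_n` of the paper; for `k = 0` it is `1`. -/
noncomputable def NilCoxeter.basisElem (F : Type) [Field F] (n k : ℕ) :
    NilCoxeter F (n + 1) :=
  ((List.range' (n - k) k).map
    (fun j => if h : j < n then NilCoxeter.u F (n + 1) ⟨j, h⟩ else 0)).prod

/-!
Write `b_k = u_{n-k} ⋯ u_{n-1}` (0-indexed). For each generator `u_i` of `N_{n+1}` the product
`u_i b_k` is `b_{k+1}`, `0`, or `b_k` times a generator of `N_n`. Reading these rules as operators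
on the free right `N_n`-module `⊕ e_k N_n` gives operators satisfying the nilcoxeter relations,
hence a representation `ρ` of `N_{n+1}`. The map `Σ e_k x_k ↦ Σ b_k x_k` intertwines `ρ w` with
left multiplication by `w`, and `ρ (b_k x) e_0 = e_k x`; so `w ↦ ρ w e_0` and that map are
mutually inverse, and the `b_k` form a basis.
-/

namespace NilCoxeter

open MulOpposite

variable (F : Type) [Field F]

/-- The generator `u_i` of `N_m`, 0-indexed and extended by `0` to all `i : ℕ`. -/
noncomputable def gen (m i : ℕ) : NilCoxeter F m :=
  if h : i < m - 1 then u F m ⟨i, h⟩ else 0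

variable {F}

theorem u_eq_gen {m : ℕ} (i : Fin (m - 1)) : u F m i = gen F m i := by
  rw [gen, dif_pos i.isLt]

theorem mkAlgHom_ι {m : ℕ} (i : Fin (m - 1)) :
    RingQuot.mkAlgHom F (NilCoxeterRel F m) (FreeAlgebra.ι F i) = gen F m i :=
  u_eq_gen i

theorem gen_mul_self (m i : ℕ) : gen F m i * gen F m i = 0 := by
  unfold gen
  split_ifs with h
  · simpa only [map_mul, map_zero, u] using
      RingQuot.mkAlgHom_rel F (NilCoxeterRel.sq (F := F) (n := m) ⟨i, h⟩)
  · simp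

theorem gen_mul_gen_comm {m i j : ℕ} (h : i + 1 < j ∨ j + 1 < i) :
    gen F m i * gen F m j = gen F m j * gen F m i := by
  unfold gen
  split_ifs with hi hj <;> try simp
  simpa only [map_mul, u] using RingQuot.mkAlgHom_rel F
    (NilCoxeterRel.comm (F := F) (n := m) ⟨i, hi⟩ ⟨j, hj⟩ h)

theorem gen_braid {m i j : ℕ} (h : j = i + 1) :
    gen F m i * (gen F m j * gen F m i) = gen F m j * (gen F m i * gen F m j) := by
  unfold gen
  split_ifs with hi hj <;> try simp
  simpa only [map_mul, u, mul_assoc] using RingQuot.mkAlgHom_rel F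
    (NilCoxeterRel.braid (F := F) (n := m) ⟨i, hi⟩ ⟨j, hj⟩ h)

theorem incl_gen {n i : ℕ} (h : i < n - 1) : incl F n (gen F n i) = gen F (n + 1) i := by
  rw [gen, dif_pos h, incl, u, RingQuot.liftAlgHom_mkAlgHom_apply, FreeAlgebra.lift_ι_apply,
    u_eq_gen]
  rfl

@[elab_as_elim]
theorem induction_on {m : ℕ} {P : NilCoxeter F m → Prop} (w : NilCoxeter F m)
    (algebraMap : ∀ r : F, P (algebraMap F _ r)) (gen : ∀ i < m - 1, P (gen F m i))
    (mul : ∀ a b, P a → P b → P (a * b)) (add : ∀ a b, P a → P b → P (a + b)) : P w := by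
  obtain ⟨p, rfl⟩ := RingQuot.mkAlgHom_surjective F (NilCoxeterRel F m) w
  induction p using FreeAlgebra.induction with
  | grade0 r => simpa only [AlgHom.commutes] using algebraMap r
  | grade1 i => simpa only [mkAlgHom_ι] using gen i i.isLt
  | mul a b ha hb => simpa only [map_mul] using mul _ _ ha hb
  | add a b ha hb => simpa only [map_add] using add _ _ ha hb

theorem basisElem_zero (n : ℕ) : basisElem F n 0 = 1 := by
  simp [basisElem]

theorem basisElem_succ {n k : ℕ} (hk : k < n) :
    basisElem F n (k + 1) = gen F (n + 1) (n - k - 1) * basisElem F n k := by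
  have hrange : List.range' (n - (k + 1)) (k + 1) = (n - k - 1) :: List.range' (n - k) k := by
    rw [← Nat.sub_sub, List.range', Nat.sub_add_cancel (by omega)]
  rw [basisElem, hrange, List.map_cons, List.prod_cons, basisElem]
  congr 1

theorem gen_mul_basisElem_of_lt {n k j : ℕ} (hk : k ≤ n) (h : j + 1 < n - k) :
    gen F (n + 1) j * basisElem F n k = basisElem F n k * gen F (n + 1) j := by
  induction k with
  | zero => simp [basisElem_zero]
  | succ k ih =>
    rw [basisElem_succ (by omega), ← mul_assoc, gen_mul_gen_comm (by omega), mul_assoc,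
      ih (by omega) (by omega), mul_assoc]

theorem gen_mul_basisElem_eq_zero {n k : ℕ} (hk₀ : 0 < k) (hk : k ≤ n) :
    gen F (n + 1) (n - k) * basisElem F n k = 0 := by
  obtain ⟨k, rfl⟩ := Nat.exists_eq_add_one_of_ne_zero hk₀.ne'
  rw [basisElem_succ (by omega), ← mul_assoc, Nat.sub_sub, gen_mul_self, zero_mul]

theorem gen_mul_basisElem_of_gt {n k j : ℕ} (hk : k ≤ n) (hj : j < n) (h : n - k < j) :
    gen F (n + 1) j * basisElem F n k = basisElem F n k * gen F (n + 1) (j - 1) := by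
  induction k with
  | zero => omega
  | succ k ih =>
    rw [basisElem_succ (by omega)]
    rcases Nat.lt_or_ge (n - k) j with hlt | hge
    · rw [← mul_assoc, gen_mul_gen_comm (by omega), mul_assoc, ih (by omega) hlt, mul_assoc]
    · -- `j = n - k`: the braid relation turns `u_j u_{j-1} u_j` into `u_{j-1} u_j u_{j-1}`
      obtain ⟨k, rfl⟩ := Nat.exists_eq_add_one_of_ne_zero (show k ≠ 0 by omega)
      rw [basisElem_succ (by omega), show n - (k + 1) - 1 = j - 1 by omega,
        show n - k - 1 = j by omega]
      calc _ = gen F (n + 1) j * (gen F (n + 1) (j - 1) * gen F (n + 1) j) * basisElem F n k := by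
            simp only [mul_assoc]
        _ = gen F (n + 1) (j - 1) * gen F (n + 1) j *
              (gen F (n + 1) (j - 1) * basisElem F n k) := by
            rw [← gen_braid (i := j - 1) (j := j) (by omega)]
            simp only [mul_assoc]
        _ = _ := by
            rw [gen_mul_basisElem_of_lt (by omega) (by omega)]
            simp only [mul_assoc]

private theorem position_cases (i k n : ℕ) :
    i + 1 + k < n ∨ i + 1 + k = n ∨ i + k = n ∨ n < i + k := by
  omega

section Action

variable (F) (n : ℕ)

/-- `u_i` acting on the free right `N_n`-module with basis `e_0, …, e_n`, as it must act if
`e_k` is `basisElem F n k`: `u_i b_k` is `b_{k+1}`, `0`, `b_k u_{i-1}` or `b_k u_i` according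
as `i + 1 + k = n`, `i + k = n`, `i + k > n` or `i + 1 + k < n`. -/
noncomputable def genAction (i : ℕ) :
    Module.End (NilCoxeter F n)ᵐᵒᵖ (Fin (n + 1) →₀ (NilCoxeter F n)ᵐᵒᵖ) :=
  Finsupp.lsum ℕ fun k =>
    if h : i + 1 + k = n then Finsupp.lsingle ⟨k + 1, by omega⟩
    else if i + k = n then 0
    else if n < i + k then Finsupp.lsingle k ∘ₗ LinearMap.mulRight _ (op (gen F n (i - 1)))
    else Finsupp.lsingle k ∘ₗ LinearMap.mulRight _ (op (gen F n i))

variable {F n} {i : ℕ} {k : Fin (n + 1)} (x : (NilCoxeter F n)ᵐᵒᵖ)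

theorem genAction_single_of_add_one_eq (h : i + 1 + k = n) :
    genAction F n i (Finsupp.single k x) = Finsupp.single ⟨k + 1, by omega⟩ x := by
  rw [genAction, Finsupp.lsum_single, dif_pos h, Finsupp.lsingle_apply]

theorem genAction_single_of_add_eq (h : i + k = n) :
    genAction F n i (Finsupp.single k x) = 0 := by
  rw [genAction, Finsupp.lsum_single, dif_neg (by omega), if_pos h, LinearMap.zero_apply]

theorem genAction_single_of_gt (h : n < i + k) :
    genAction F n i (Finsupp.single k x) = Finsupp.single k (x * op (gen F n (i - 1))) := by
  rw [genAction, Finsupp.lsum_single, dif_neg (by omega), if_neg (by omega), if_pos h]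
  rfl

theorem genAction_single_of_lt (h : i + 1 + k < n) :
    genAction F n i (Finsupp.single k x) = Finsupp.single k (x * op (gen F n i)) := by
  rw [genAction, Finsupp.lsum_single, dif_neg (by omega), if_neg (by omega), if_neg (by omega)]
  rfl

theorem genAction_mul_self : genAction F n i * genAction F n i = 0 := by
  refine Finsupp.lhom_ext fun k x => ?_
  have := k.isLt
  rw [Module.End.mul_apply, LinearMap.zero_apply]
  rcases position_cases i k n with h | h | h | h <;>
  simp (disch := (try simp only [Fin.val_mk]); omega) only [genAction_single_of_add_one_eq,
    genAction_single_of_add_eq, genAction_single_of_gt, genAction_single_of_lt, map_zero,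
    mul_assoc, ← op_mul, gen_mul_self, op_zero, mul_zero, Finsupp.single_zero]

theorem genAction_comm {j : ℕ} (h : i + 1 < j) :
    genAction F n i * genAction F n j = genAction F n j * genAction F n i := by
  refine Finsupp.lhom_ext fun k x => ?_
  have := k.isLt
  simp only [Module.End.mul_apply]
  rcases position_cases i k n with h | h | h | h <;>
  rcases position_cases j k n with h | h | h | h <;>
  first
  | omega
  | simp (disch := (try simp only [Fin.val_mk]); omega) only [genAction_single_of_add_one_eq,
      genAction_single_of_add_eq, genAction_single_of_gt, genAction_single_of_lt, map_zero,
      mul_assoc, ← op_mul, gen_mul_gen_comm]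

theorem genAction_braid :
    genAction F n i * genAction F n (i + 1) * genAction F n i =
      genAction F n (i + 1) * genAction F n i * genAction F n (i + 1) := by
  refine Finsupp.lhom_ext fun k x => ?_
  have := k.isLt
  simp only [Module.End.mul_apply]
  rcases position_cases i k n with h | h | h | h <;>
  rcases position_cases (i + 1) k n with h | h | h | h <;>
  first
  | omega
  | simp (disch := (try simp only [Fin.val_mk]); omega) only [genAction_single_of_add_one_eq,
      genAction_single_of_add_eq, genAction_single_of_gt, genAction_single_of_lt, map_zero,
      mul_assoc, ← op_mul, Nat.add_sub_cancel, gen_braid, gen_braid (F := F) (m := n) (i := i) rfl]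

end Action

variable (F n) in
noncomputable def rep :
    NilCoxeter F (n + 1) →ₐ[F]
      Module.End (NilCoxeter F n)ᵐᵒᵖ (Fin (n + 1) →₀ (NilCoxeter F n)ᵐᵒᵖ) :=
  RingQuot.liftAlgHom F
    ⟨FreeAlgebra.lift F fun i => genAction F n i, by
      rintro x y (⟨i⟩ | ⟨i, j, h⟩ | ⟨i, j, h⟩) <;>
        simp only [map_mul, map_zero, FreeAlgebra.lift_ι_apply]
      · exact genAction_mul_self
      · exact h.elim genAction_comm fun h ↦ (genAction_comm h).symm
      · simpa only [h] using genAction_braid⟩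

theorem rep_gen {n i : ℕ} (h : i < n) : rep F n (gen F (n + 1) i) = genAction F n i := by
  rw [gen, dif_pos (by omega), rep, u, RingQuot.liftAlgHom_mkAlgHom_apply,
    FreeAlgebra.lift_ι_apply]

theorem rep_basisElem {n k : ℕ} (hk : k ≤ n) (x : (NilCoxeter F n)ᵐᵒᵖ) :
    rep F n (basisElem F n k) (Finsupp.single 0 x) = Finsupp.single ⟨k, by omega⟩ x := by
  induction k with
  | zero => rw [basisElem_zero, map_one, Module.End.one_apply]; rfl
  | succ k ih =>
    rw [basisElem_succ (by omega), map_mul, Module.End.mul_apply, ih (by omega),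
      rep_gen (by omega), genAction_single_of_add_one_eq _ (by simp only; omega)]

theorem rep_incl_single_zero {n : ℕ} (a c : NilCoxeter F n) :
    rep F n (incl F n a) (Finsupp.single 0 (op c)) = Finsupp.single 0 (op (a * c)) := by
  induction a using induction_on generalizing c with
  | algebraMap r =>
    rw [AlgHom.commutes, AlgHom.commutes, Module.algebraMap_end_apply, Finsupp.smul_single]
    congr 1
  | gen i hi =>
    rw [incl_gen hi, rep_gen (by omega),
      genAction_single_of_lt _ (by simp only [Fin.val_zero]; omega), op_mul]
  | mul a b ha hb => rw [map_mul, map_mul, Module.End.mul_apply, hb, ha, mul_assoc]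
  | add a b ha hb =>
    rw [map_add, map_add, LinearMap.add_apply, ha, hb, add_mul, op_add, Finsupp.single_add]

section RightModule

attribute [local instance] rightModule

variable {n : ℕ}

theorem op_smul_eq_mul_incl (a : (NilCoxeter F n)ᵐᵒᵖ) (w : NilCoxeter F (n + 1)) :
    a • w = w * incl F n a.unop :=
  rfl

theorem linearCombination_single (k : Fin (n + 1)) (x : (NilCoxeter F n)ᵐᵒᵖ) :
    Finsupp.linearCombination _ (fun k : Fin (n + 1) => basisElem F n k) (Finsupp.single k x) =
      basisElem F n k * incl F n x.unop := by
  rw [Finsupp.linearCombination_single, op_smul_eq_mul_incl]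

theorem linearCombination_genAction {i : ℕ} (hi : i < n)
    (m : Fin (n + 1) →₀ (NilCoxeter F n)ᵐᵒᵖ) :
    Finsupp.linearCombination _ (fun k : Fin (n + 1) => basisElem F n k) (genAction F n i m) =
      gen F (n + 1) i * Finsupp.linearCombination _ (fun k : Fin (n + 1) => basisElem F n k) m := by
  induction m using Finsupp.induction_linear with
  | zero => simp only [map_zero, mul_zero]
  | add f g hf hg => rw [map_add, map_add, hf, hg, map_add, mul_add]
  | single k x =>
    have := k.isLt
    rw [linearCombination_single]
    rcases position_cases i k n with h | h | h | h
    · rw [genAction_single_of_lt _ h, linearCombination_single, unop_mul, unop_op, map_mul,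
        incl_gen (by omega), ← mul_assoc, ← mul_assoc,
        gen_mul_basisElem_of_lt (by omega) (by omega)]
    · rw [genAction_single_of_add_one_eq _ h, linearCombination_single, ← mul_assoc,
        basisElem_succ (by omega), show n - k - 1 = i by omega]
    · rw [genAction_single_of_add_eq _ h, map_zero, ← mul_assoc, show i = n - k by omega,
        gen_mul_basisElem_eq_zero (by omega) (by omega), zero_mul]
    · rw [genAction_single_of_gt _ h, linearCombination_single, unop_mul, unop_op, map_mul,
        incl_gen (by omega), ← mul_assoc, ← mul_assoc,
        gen_mul_basisElem_of_gt (by omega) hi (by omega)]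

theorem linearCombination_algebraMap_smul (r : F) (m : Fin (n + 1) →₀ (NilCoxeter F n)ᵐᵒᵖ) :
    Finsupp.linearCombination _ (fun k : Fin (n + 1) => basisElem F n k) (r • m) =
      algebraMap F _ r *
        Finsupp.linearCombination _ (fun k : Fin (n + 1) => basisElem F n k) m := by
  induction m using Finsupp.induction_linear with
  | zero => simp only [smul_zero, map_zero, mul_zero]
  | add f g hf hg => rw [smul_add, map_add, map_add, hf, hg, mul_add]
  | single k x =>
    rw [Finsupp.smul_single, linearCombination_single, linearCombination_single, unop_smul,
      map_smul, mul_smul_comm, Algebra.smul_def]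

theorem linearCombination_rep (w : NilCoxeter F (n + 1))
    (m : Fin (n + 1) →₀ (NilCoxeter F n)ᵐᵒᵖ) :
    Finsupp.linearCombination _ (fun k : Fin (n + 1) => basisElem F n k) (rep F n w m) =
      w * Finsupp.linearCombination _ (fun k : Fin (n + 1) => basisElem F n k) m := by
  induction w using induction_on generalizing m with
  | algebraMap r =>
    rw [AlgHom.commutes, Module.algebraMap_end_apply, linearCombination_algebraMap_smul]
  | gen i hi => rw [rep_gen (by omega), linearCombination_genAction (by omega)]
  | mul a b ha hb => rw [map_mul, Module.End.mul_apply, ha, hb, mul_assoc]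
  | add a b ha hb => rw [map_add, LinearMap.add_apply, map_add, ha, hb, add_mul]

variable (F n) in
noncomputable def coords :
    NilCoxeter F (n + 1) →ₗ[(NilCoxeter F n)ᵐᵒᵖ] Fin (n + 1) →₀ (NilCoxeter F n)ᵐᵒᵖ where
  toFun w := rep F n w (Finsupp.single 0 1)
  map_add' a b := by rw [map_add, LinearMap.add_apply]
  map_smul' a w := by
    rw [RingHom.id_apply, op_smul_eq_mul_incl, map_mul, Module.End.mul_apply, ← op_one,
      rep_incl_single_zero, mul_one, op_unop, ← map_smul, Finsupp.smul_single, smul_eq_mul,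
      op_one, mul_one]

theorem coords_apply (w : NilCoxeter F (n + 1)) :
    coords F n w = rep F n w (Finsupp.single 0 1) :=
  rfl

theorem linearCombination_coords (w : NilCoxeter F (n + 1)) :
    Finsupp.linearCombination _ (fun k : Fin (n + 1) => basisElem F n k) (coords F n w) = w := by
  rw [coords_apply, linearCombination_rep, linearCombination_single,
    Fin.val_zero, basisElem_zero, unop_one, map_one, one_mul, mul_one]

theorem coords_linearCombination (m : Fin (n + 1) →₀ (NilCoxeter F n)ᵐᵒᵖ) :
    coords F n (Finsupp.linearCombination _ (fun k : Fin (n + 1) => basisElem F n k) m) = m := by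
  induction m using Finsupp.induction_linear with
  | zero => simp only [map_zero]
  | add f g hf hg => rw [map_add, map_add, hf, hg]
  | single k x =>
    rw [linearCombination_single, coords_apply, map_mul, Module.End.mul_apply, ← op_one,
      rep_incl_single_zero, mul_one, op_unop, rep_basisElem (by omega)]

variable (F n) in
noncomputable def basis :
    Module.Basis (Fin (n + 1)) (NilCoxeter F n)ᵐᵒᵖ (NilCoxeter F (n + 1)) :=
  .mk (v := fun k => basisElem F n k)
    (Function.LeftInverse.injective coords_linearCombination)
    ((span_range_eq_top_iff_surjective_finsuppLinearCombination _).2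
      (Function.RightInverse.surjective linearCombination_coords)).ge

theorem basis_apply (k : Fin (n + 1)) : basis F n k = basisElem F n k :=
  Module.Basis.mk_apply ..

end RightModule

end NilCoxeter

/-- The nilcoxeter algebra `N_{n+1}` is free of rank `n+1` as a right module over the
subalgebra `N_n`, with basis `1, u_n, u_{n-1}u_n, ..., u_1 u_2 ⋯ u_n`. -/
theorem stmt_11 (F : Type) [Field F] (n : ℕ) :
    letI := NilCoxeter.rightModule F n
    ∃ Bas : Module.Basis (Fin (n + 1)) (NilCoxeter F n)ᵐᵒᵖ (NilCoxeter F (n + 1)),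
      ∀ k : Fin (n + 1), Bas k = NilCoxeter.basisElem F n k :=
  ⟨NilCoxeter.basis F n, NilCoxeter.basis_apply⟩
end
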